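/- arXiv:1810.02301 — 2 statements merged into one kernel-verified Lean document; each statement's English description precedes it below -/
import Mathlib

section
/- For every n ≥ 1, the Sudler product at a Fibonacci index decomposes as P_{F_n}(φ) = ∏_{r=1}^{F_n} |2 sin(π r φ)| = A_n · B_n · C_n. -/
open Real Filter Finset

/-- The fractional part of the golden ratio. -/
noncomputable def goldenφ : ℝ := (Real.sqrt 5 - 1) / 2

/-- The Sudler product `P_N(α) = ∏_{r=1}^N |2 sin(π r α)|`. -/
noncomputable def sudlerP (N : ℕ) (α : ℝ) : ℝ :=
  ∏ r ∈ Finset.Icc 1 N, |2 * Real.sin (π * r * α)|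

/-- `s_{nt} = 2 sin π( t/F_n − φ^n ({t F_{n−1}/F_n} − 1/2) )`. -/
noncomputable def sval (n t : ℕ) : ℝ :=
  2 * Real.sin (π * ((t : ℝ) / (Nat.fib n : ℝ) -
    goldenφ ^ n * (Int.fract ((t : ℝ) * (Nat.fib (n - 1) : ℝ) / (Nat.fib n : ℝ)) - 1 / 2)))

/-- Product `∏_{t=1}^{(q−1)/2} f t`, where when `q` is even the final factor (at `t = q/2`)
is taken with exponent `1/2`. -/
noncomputable def halfProd (f : ℕ → ℝ) (q : ℕ) : ℝ :=
  (∏ t ∈ Finset.Icc 1 ((q - 1) / 2), f t) * (if Even q then Real.sqrt (f (q / 2)) else 1)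

/-- `A_n = |2 F_n sin(π φ^n)|`. -/
noncomputable def Aval (n : ℕ) : ℝ := |2 * (Nat.fib n : ℝ) * Real.sin (π * goldenφ ^ n)|

/-- `B_n = ∏_{t=1}^{F_n−1} |s_{nt}/(2 sin(π t/F_n))|`. -/
noncomputable def Bval (n : ℕ) : ℝ :=
  ∏ t ∈ Finset.Icc 1 (Nat.fib n - 1), |sval n t / (2 * Real.sin (π * t / (Nat.fib n : ℝ)))|

/-- `C_n = ∏_{t=1}^{(F_n−1)/2} (1 − s_{n0}²/s_{nt}²)`, final factor with exponent `1/2`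
when `F_n` is even. -/
noncomputable def Cval (n : ℕ) : ℝ :=
  halfProd (fun t => 1 - (sval n 0) ^ 2 / (sval n t) ^ 2) (Nat.fib n)

open goldenRatio Polynomial
set_option maxHeartbeats 1000000

lemma phi_eq : goldenφ = -goldenConj := by unfold goldenφ goldenConj; ring

lemma phi_pos : 0 < goldenφ := by
  unfold goldenφ
  have : (2:ℝ) < Real.sqrt 5 := by
    rw [show (2:ℝ) = Real.sqrt 4 by rw [show (4:ℝ) = 2^2 by norm_num, Real.sqrt_sq]; norm_num]
    exact Real.sqrt_lt_sqrt (by norm_num) (by norm_num)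
  linarith

lemma phi_lt_one : goldenφ < 1 := by
  unfold goldenφ
  have : Real.sqrt 5 < 3 := by
    rw [show (3:ℝ) = Real.sqrt 9 by rw [show (9:ℝ) = 3^2 by norm_num, Real.sqrt_sq]; norm_num]
    exact Real.sqrt_lt_sqrt (by norm_num) (by norm_num)
  linarith

lemma psi_pow (m : ℕ) : goldenConj ^ (m+1) = (Nat.fib (m+1) : ℝ) * goldenConj + Nat.fib m := by
  induction m with
  | zero => simp
  | succ k ih =>
    have : goldenConj ^ (k+2) = goldenConj ^ (k+1) * goldenConj := by ring
    rw [this, ih, Nat.fib_add_two]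
    push_cast
    nlinarith [goldenConj_sq]

lemma cassini (m : ℕ) : (Nat.fib (m+1) : ℤ)^2 - Nat.fib (m+2) * Nat.fib m = (-1)^m := by
  induction m with
  | zero => simp
  | succ k ih =>
    have h3 : (Nat.fib (k+3) : ℤ) = Nat.fib (k+1) + Nat.fib (k+2) := by
      exact_mod_cast (Nat.fib_add_two (n := k+1))
    have h2 : (Nat.fib (k+2) : ℤ) = Nat.fib k + Nat.fib (k+1) := by
      exact_mod_cast (Nat.fib_add_two (n := k))
    rw [pow_succ]
    linear_combination (-1 : ℤ) * ih + (Nat.fib (k+2):ℤ) * h2 - (Nat.fib (k+1):ℤ) * h3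

lemma fib_phi (n : ℕ) (hn : 1 ≤ n) : (-goldenφ)^n = (Nat.fib (n-1) : ℝ) - Nat.fib n * goldenφ := by
  obtain ⟨m, rfl⟩ : ∃ m, n = m + 1 := ⟨n-1, (Nat.succ_pred_eq_of_pos hn).symm⟩
  have hng : (-goldenφ) = goldenConj := by rw [phi_eq]; ring
  rw [hng, psi_pow, Nat.add_sub_cancel, phi_eq]; ring

lemma sqrt5_pos : (0:ℝ) < Real.sqrt 5 := Real.sqrt_pos.2 (by norm_num)

lemma fib_phi_pow_le (n : ℕ) : (Nat.fib n : ℝ) * goldenφ ^ n ≤ 1 := by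
  rw [Real.coe_fib_eq, phi_eq, neg_pow]
  have hmul : (goldenRatio ^ n - goldenConj ^ n) / Real.sqrt 5 * ((-1) ^ n * goldenConj ^ n)
      = (1 - (-1)^n * (goldenConj^2)^n) / Real.sqrt 5 := by
    rw [div_mul_eq_mul_div]
    congr 1
    have h1 : (goldenRatio * goldenConj)^n = (-1:ℝ)^n := by rw [goldenRatio_mul_goldenConj]
    have h2 : (-1:ℝ)^n * (-1)^n = 1 := by
      rw [← pow_add]; exact Even.neg_one_pow ⟨n, by ring⟩
    set g := goldenRatio with hg
    set c := goldenConj with hc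
    calc (g ^ n - c ^ n) * ((-1) ^ n * c ^ n)
        = (-1)^n * (g * c)^n - (-1)^n * (c^2)^n := by
          rw [mul_pow, ← pow_mul]; ring
      _ = 1 - (-1)^n * (c^2)^n := by rw [h1, h2]
  rw [hmul, div_le_one sqrt5_pos]
  have hq : (0:ℝ) ≤ (goldenConj^2)^n := pow_nonneg (sq_nonneg _) n
  have hq1 : (goldenConj^2)^n ≤ 1 := by
    apply pow_le_one₀ (sq_nonneg _)
    nlinarith [goldenConj_neg, neg_one_lt_goldenConj]
  have habs : (-1:ℝ)^n * (goldenConj^2)^n ≥ -1 := by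
    rcases Nat.even_or_odd n with he | ho
    · rw [he.neg_one_pow]; linarith
    · rw [ho.neg_one_pow]; linarith
  have h25 : (2:ℝ) ≤ Real.sqrt 5 := by
    rw [show (2:ℝ) = Real.sqrt 4 by rw [show (4:ℝ) = 2^2 by norm_num, Real.sqrt_sq]; norm_num]
    exact Real.sqrt_le_sqrt (by norm_num)
  linarith

lemma sin_prod_identity (u v : ℝ) : Real.sin (u+v) * Real.sin (u-v) = Real.sin u^2 - Real.sin v^2 := by
  rw [Real.sin_add, Real.sin_sub]
  have h1 := Real.sin_sq_add_cos_sq u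
  have h2 := Real.sin_sq_add_cos_sq v
  nlinarith [h1, h2]

lemma sin_ge_sin (c x : ℝ) (hc : 0 < c) (hc2 : c ≤ 1/2) (hx : c ≤ x) (hx2 : x ≤ 1 - c) :
    Real.sin (π*c) ≤ Real.sin (π*x) := by
  have hπ := Real.pi_pos
  rcases le_or_gt x (1/2) with h | h
  · apply Real.sin_le_sin_of_le_of_le_pi_div_two (by nlinarith) (by nlinarith) (by nlinarith)
  · have : Real.sin (π*x) = Real.sin (π*(1-x)) := by
      rw [show π*(1-x) = π - π*x by ring, Real.sin_pi_sub]
    rw [this]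
    apply Real.sin_le_sin_of_le_of_le_pi_div_two (by nlinarith) (by nlinarith) (by nlinarith)

lemma abs_one_sub_exp (θ : ℝ) (h0 : 0 ≤ θ) (h2 : θ ≤ 2*π) :
    ‖1 - Complex.exp (θ * Complex.I)‖ = 2 * Real.sin (θ/2) := by
  have hexp : Complex.exp (θ * Complex.I) = Complex.cos θ + Complex.sin θ * Complex.I :=
    Complex.exp_mul_I _
  have hre : (1 : ℂ) - Complex.exp (θ * Complex.I)
      = Complex.ofReal (1 - Real.cos θ) + Complex.ofReal (- Real.sin θ) * Complex.I := by
    rw [hexp]; push_cast; ring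
  rw [hre, Complex.norm_def, Complex.normSq_add_mul_I]
  have hcos : Real.cos θ = 1 - 2 * Real.sin (θ/2)^2 := by
    have h1 : Real.cos (2 * (θ/2)) = Real.cos (θ/2)^2 - Real.sin (θ/2)^2 := Real.cos_two_mul' ..
    rw [show 2*(θ/2) = θ by ring] at h1
    have h' := Real.sin_sq_add_cos_sq (θ/2)
    linarith
  have hs : (1 - Real.cos θ)^2 + (-Real.sin θ)^2 = (2 * Real.sin (θ/2))^2 := by
    have hsin2 := Real.sin_sq_add_cos_sq θ
    nlinarith [hcos]
  rw [hs, Real.sqrt_sq]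
  have : 0 ≤ Real.sin (θ/2) := Real.sin_nonneg_of_nonneg_of_le_pi (by linarith) (by linarith)
  linarith

lemma prod_two_sin (q : ℕ) (hq : 1 ≤ q) :
    ∏ t ∈ Finset.Icc 1 (q-1), (2 * Real.sin (π * t / q)) = q := by
  have hq0 : q ≠ 0 := by omega
  set ζ : ℂ := Complex.exp (2 * π * Complex.I / q) with hζ
  have hprim : IsPrimitiveRoot ζ q := Complex.isPrimitiveRoot_exp q hq0
  -- polynomial identity
  have h1 : (X:ℂ[X])^q - 1 = ∏ μ ∈ nthRootsFinset q (1:ℂ), (X - C μ) :=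
    X_pow_sub_one_eq_prod (by omega) hprim
  have hmem : (1:ℂ) ∈ nthRootsFinset q (1:ℂ) := one_mem_nthRootsFinset (by omega)
  have h3 : (∑ i ∈ range q, (X:ℂ[X])^i) * (X - 1) = X^q - 1 := geom_sum_mul _ q
  have hpoly : (∑ i ∈ range q, (X:ℂ[X])^i)
      = ∏ μ ∈ (nthRootsFinset q (1:ℂ)).erase 1, (X - C μ) := by
    have h2 : ∏ μ ∈ nthRootsFinset q (1:ℂ), (X - C μ)
        = (X - C 1) * ∏ μ ∈ (nthRootsFinset q (1:ℂ)).erase 1, (X - C μ) :=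
      (Finset.mul_prod_erase _ _ hmem).symm
    apply mul_right_cancel₀ (X_sub_C_ne_zero (1:ℂ))
    rw [show ((X:ℂ[X]) - C 1) = X - 1 by simp]
    rw [h3, h1, h2, mul_comm]
    rw [show ((X:ℂ[X]) - C 1) = X - 1 by simp]
  -- evaluate at 1
  have heval : (q : ℂ) = ∏ μ ∈ (nthRootsFinset q (1:ℂ)).erase 1, (1 - μ) := by
    have := congrArg (Polynomial.eval 1) hpoly
    simpa [Polynomial.eval_finset_sum, Polynomial.eval_prod] using this
  -- the finset
  have himg : nthRootsFinset q (1:ℂ) = Finset.image (fun k => ζ^k) (Finset.range q) := by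
    have := hprim.nthRoots_eq (one_pow q)
    rw [nthRootsFinset_def, this]
    simp only [mul_one]
    rw [Multiset.toFinset_map]
    congr 1
    ext x
    simp
  have hrange : Finset.range q = insert 0 (Finset.Icc 1 (q-1)) := by
    ext x; simp; omega
  have hnotin : (1:ℂ) ∉ Finset.image (fun k => ζ^k) (Finset.Icc 1 (q-1)) := by
    simp only [Finset.mem_image, Finset.mem_Icc, not_exists]
    rintro k ⟨⟨hk1, hk2⟩, hk⟩
    exact hprim.pow_ne_one_of_pos_of_lt (by omega) (by omega) hk
  have herase : (nthRootsFinset q (1:ℂ)).erase 1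
      = Finset.image (fun k => ζ^k) (Finset.Icc 1 (q-1)) := by
    rw [himg, hrange, Finset.image_insert, pow_zero, Finset.erase_insert hnotin]
  have hinj : Set.InjOn (fun k => ζ^k) (Finset.Icc 1 (q-1)) := by
    intro a ha b hb hab
    simp only [Finset.coe_Icc, Set.mem_Icc] at ha hb
    exact hprim.pow_inj (by omega) (by omega) hab
  have heval2 : (q:ℂ) = ∏ k ∈ Finset.Icc 1 (q-1), (1 - ζ^k) := by
    rw [heval, herase, Finset.prod_image (fun a ha b hb => hinj ha hb)]
  -- take abs
  have habs : (q:ℝ) = ∏ k ∈ Finset.Icc 1 (q-1), ‖1 - ζ^k‖ := by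
    have := congrArg (‖·‖) heval2
    rwa [norm_prod, Complex.norm_natCast] at this
  have hfactor : ∀ k ∈ Finset.Icc 1 (q-1), 2 * Real.sin (π * k / q) = ‖1 - ζ^k‖ := by
    intro k hk
    simp only [Finset.mem_Icc] at hk
    have hζk : ζ^k = Complex.exp ((2*π*k/q : ℝ) * Complex.I) := by
      rw [hζ, ← Complex.exp_nat_mul]
      congr 1
      push_cast
      field_simp
    have hkq : (k:ℝ) ≤ q := by
      have : k ≤ q := by omega
      exact_mod_cast this
    have hq' : (0:ℝ) < q := by positivity
    have hπ := Real.pi_pos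
    rw [hζk, abs_one_sub_exp]
    · congr 1
      field_simp
    · positivity
    · rw [div_le_iff₀ hq']
      nlinarith
  calc ∏ t ∈ Finset.Icc 1 (q-1), (2 * Real.sin (π * t / q))
      = ∏ k ∈ Finset.Icc 1 (q-1), ‖1 - ζ^k‖ := Finset.prod_congr rfl hfactor
    _ = q := habs.symm

lemma nt_cast_mod (a q : ℕ) : ((a % q : ℕ) : ℤ) = (a : ℤ) % q := by push_cast; ring

lemma nt_mem {p q : ℕ} (hq : 2 ≤ q) (hpq : Nat.Coprime p q) {r : ℕ} (h1 : 1 ≤ r) (h2 : r ≤ q - 1) :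
    1 ≤ (r * p) % q ∧ (r * p) % q ≤ q - 1 := by
  have hlt : (r*p) % q < q := Nat.mod_lt _ (by omega)
  have hne : (r*p) % q ≠ 0 := by
    intro h
    have hd : q ∣ r * p := Nat.dvd_of_mod_eq_zero h
    have hd2 : q ∣ r := hpq.symm.dvd_of_dvd_mul_right hd
    have := Nat.le_of_dvd (by omega) hd2
    omega
  omega

lemma nt_inj {p q : ℕ} (hq : 2 ≤ q) (hpq : Nat.Coprime p q) {r₁ r₂ : ℕ}
    (ha : r₁ ≤ q - 1) (hb : r₂ ≤ q - 1) (h : (r₁ * p) % q = (r₂ * p) % q) : r₁ = r₂ := by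
  have hmod : r₁ * p ≡ r₂ * p [MOD q] := h
  have h0 : r₁ ≡ r₂ [MOD q] := hmod.cancel_right_of_coprime hpq.symm
  have h1 : r₁ % q = r₂ % q := h0
  rw [Nat.mod_eq_of_lt (by omega), Nat.mod_eq_of_lt (by omega)] at h1
  exact h1

lemma nt_pair {p q : ℕ} (hq : 2 ≤ q) (hpq : Nat.Coprime p q) {r : ℕ} (h1 : 1 ≤ r) (h2 : r ≤ q - 1) :
    ((q - r) * p) % q = q - (r * p) % q := by
  obtain ⟨hu1, hu2⟩ := nt_mem hq hpq h1 h2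
  set u := (r * p) % q with hu
  have hmu : (-(r * p : ℤ)) % q = (-(u:ℤ)) % q := by
    apply Int.ModEq.neg
    unfold Int.ModEq
    rw [show (u:ℤ) = (r * p : ℤ) % q by rw [hu]; rw [nt_cast_mod]; push_cast; ring,
      Int.emod_emod_of_dvd _ dvd_rfl]
  have hcast : ((((q - r) * p) % q : ℕ) : ℤ) = ((q:ℤ) - r) * p % q := by
    rw [nt_cast_mod]
    rw [Nat.cast_mul, Nat.cast_sub (show r ≤ q by omega)]
  have e1 : ((q:ℤ) - r) * p % q = (-(r * p : ℤ)) % q := by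
    conv_lhs => rw [show ((q:ℤ) - r) * p = -((r:ℤ)*p) + p * q by ring]
    rw [Int.add_mul_emod_self_right]
  have e2 : ((q:ℤ) - u) % q = (-(u:ℤ)) % q := by
    conv_lhs => rw [show (q:ℤ) - u = -(u:ℤ) + 1 * q by ring]
    rw [Int.add_mul_emod_self_right]
  have e4 : ((q:ℤ) - u) % q = (q:ℤ) - u := Int.emod_eq_of_lt (by omega) (by omega)
  have hfin : ((((q - r) * p) % q : ℕ) : ℤ) = (q:ℤ) - u := by
    rw [hcast, e1, hmu, ← e2, e4]
  omega

lemma nt_mod2 {p q : ℕ} (hq : 2 ≤ q) (hpq : Nat.Coprime p q) (e k : ℤ) (he : e = 1 ∨ e = -1)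
    (hcas : (p:ℤ)^2 = e + k * q) {r : ℕ} (h1 : 1 ≤ r) (h2 : r ≤ q - 1) :
    (((r * p) % q) * p) % q = if e = 1 then r else q - r := by
  set u := (r * p) % q with hu
  have hmu : ((u:ℤ) * p) % q = ((r : ℤ) * e) % q := by
    have hm1 : ((u:ℤ) * p) % q = (((r:ℤ) * p) * p) % q := by
      apply Int.ModEq.mul_right
      unfold Int.ModEq
      rw [show (u:ℤ) = (r * p : ℤ) % q by rw [hu]; rw [nt_cast_mod]; push_cast; ring,
        Int.emod_emod_of_dvd _ dvd_rfl]
    have hm2 : ((r:ℤ) * p) * p = r * e + (r * k) * q := by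
      have h' : ((r:ℤ) * p) * p = r * (p^2) := by ring
      rw [h', hcas]; ring
    rw [hm1, hm2, Int.add_mul_emod_self_right]
  have hcast : (((u * p) % q : ℕ) : ℤ) = ((u:ℤ) * p) % q := by
    rw [nt_cast_mod]; push_cast; ring_nf
  rcases he with rfl | rfl
  · have hfin : (((u * p) % q : ℕ) : ℤ) = (r : ℤ) := by
      rw [hcast, hmu, mul_one, Int.emod_eq_of_lt (by omega) (by omega)]
    rw [if_pos rfl]
    omega
  · have e2 : ((q:ℤ) - r) % q = ((r:ℤ) * (-1)) % q := by
      conv_lhs => rw [show (q:ℤ) - r = (r:ℤ) * (-1) + 1 * q by ring]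
      rw [Int.add_mul_emod_self_right]
    have hfin : (((u * p) % q : ℕ) : ℤ) = (q:ℤ) - r := by
      rw [hcast, hmu, ← e2, Int.emod_eq_of_lt (by omega) (by omega)]
    rw [if_neg (by norm_num)]
    omega

lemma prod_perm_of_injOn (S : Finset ℕ) (σ : ℕ → ℕ) (hmaps : ∀ x ∈ S, σ x ∈ S)
    (hinj : ∀ x ∈ S, ∀ y ∈ S, σ x = σ y → x = y) (g : ℕ → ℝ) :
    ∏ x ∈ S, g (σ x) = ∏ x ∈ S, g x := by
  classical
  have himg : S.image σ = S := Finset.eq_of_subset_of_card_le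
    (Finset.image_subset_iff.2 hmaps)
    (le_of_eq (Finset.card_image_of_injOn (fun x hx y hy => hinj x hx y hy)).symm)
  calc ∏ x ∈ S, g (σ x) = ∏ y ∈ S.image σ, g y := (Finset.prod_image hinj).symm
    _ = ∏ x ∈ S, g x := by rw [himg]

lemma prod_Ioc_reflect (f : ℕ → ℝ) (q a : ℕ) (hq : 2 ≤ q) (ha1 : 1 ≤ a) (ha : a ≤ q - 1)
    (hsym : ∀ x, 1 ≤ x → x ≤ q - 1 → f (q - x) = f x) :
    ∏ x ∈ Finset.Ioc a (q - 1), f x = ∏ x ∈ Finset.Ioc 0 (q - 1 - a), f x := by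
  apply Finset.prod_nbij' (fun x => q - x) (fun y => q - y)
  · intro x hx; simp only [Finset.mem_Ioc] at *; omega
  · intro y hy; simp only [Finset.mem_Ioc] at *; omega
  · intro x hx; simp only [Finset.mem_Ioc] at hx; omega
  · intro y hy; simp only [Finset.mem_Ioc] at hy; omega
  · intro x hx; simp only [Finset.mem_Ioc] at hx
    exact (hsym x (by omega) (by omega)).symm

lemma sval_eq (n tt : ℕ) : sval n tt = 2 * Real.sin (π * ((tt:ℝ)/(Nat.fib n)
    - goldenφ^n * ((((tt * Nat.fib (n-1)) % Nat.fib n : ℕ):ℝ)/(Nat.fib n) - 1/2))) := by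
  unfold sval
  rw [show ((tt:ℝ) * (Nat.fib (n-1):ℝ) / (Nat.fib n:ℝ))
      = (((tt * Nat.fib (n-1) : ℕ):ℝ) / (Nat.fib n:ℝ)) by push_cast; ring,
    Int.fract_div_natCast_eq_div_natCast_mod]

lemma sval_zero (n : ℕ) : sval n 0 = 2 * Real.sin (π * (goldenφ^n/2)) := by
  unfold sval
  norm_num
  ring_nf

/-- For every `n ≥ 1`, the Sudler product at a Fibonacci index decomposes as
`P_{F_n}(φ) = ∏_{r=1}^{F_n} |2 sin(π r φ)| = A_n · B_n · C_n`. -/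
theorem sudler_fib_decomposition (n : ℕ) (hn : 1 ≤ n) :
    sudlerP (Nat.fib n) goldenφ = Aval n * Bval n * Cval n := by
  by_cases hqle : Nat.fib n ≤ 1
  · -- small case : fib n = 1, i.e. n = 1 or n = 2
    have hfib1 : Nat.fib n = 1 := by
      have := Nat.fib_pos.2 (show 0 < n by omega)
      omega
    have hn12 : n = 1 ∨ n = 2 := by
      by_contra h
      push_neg at h
      have h3 : 3 ≤ n := by omega
      have h2 : 2 ≤ Nat.fib n := by
        calc 2 = Nat.fib 3 := rfl
        _ ≤ Nat.fib n := Nat.fib_mono h3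
      omega
    have hB : Bval n = 1 := by
      unfold Bval
      rw [hfib1, show (1:ℕ) - 1 = 0 from rfl, Finset.Icc_eq_empty (by omega), Finset.prod_empty]
    have hC : Cval n = 1 := by
      unfold Cval halfProd
      rw [hfib1]
      rw [show ((1:ℕ) - 1)/2 = 0 from rfl, Finset.Icc_eq_empty (by omega), Finset.prod_empty,
        if_neg (by decide), mul_one]
    have hsud : sudlerP (Nat.fib n) goldenφ = |2 * Real.sin (π * goldenφ)| := by
      unfold sudlerP
      rw [hfib1, Finset.Icc_self, Finset.prod_singleton]
      norm_num
    rw [hsud, hB, hC, mul_one, mul_one]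
    unfold Aval
    rw [hfib1]
    rcases hn12 with rfl | rfl
    · norm_num [pow_one]
    · have hsq : goldenφ^2 = 1 - goldenφ := by
        unfold goldenφ
        have h5 : Real.sqrt 5 ^ 2 = 5 := Real.sq_sqrt (by norm_num)
        nlinarith
      rw [hsq, show π * (1 - goldenφ) = π - π * goldenφ by ring, Real.sin_pi_sub]
      norm_num
  · -- main case
    push_neg at hqle
    have hn3 : 3 ≤ n := by
      by_contra h
      push_neg at h
      interval_cases n <;> simp_all [Nat.fib_one, Nat.fib_two]
    set q := Nat.fib n with hqdef
    set p := Nat.fib (n-1) with hpdef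
    have hq2 : 2 ≤ q := hqle
    have hpq : Nat.Coprime p q := by
      have h := Nat.fib_coprime_fib_succ (n-1)
      rw [show n - 1 + 1 = n by omega] at h
      exact h
    have hqR : (0:ℝ) < q := by positivity
    have hqR2 : (2:ℝ) ≤ q := by exact_mod_cast hq2
    obtain ⟨k, hcas⟩ : ∃ k : ℤ, (p:ℤ)^2 = (-1)^n + k * q := by
      obtain ⟨m, hm⟩ : ∃ m, n = m + 2 := ⟨n - 2, by omega⟩
      refine ⟨(Nat.fib m : ℤ), ?_⟩
      have hc := cassini m
      have h1 : p = Nat.fib (m+1) := by rw [hpdef, hm]; norm_num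
      have h2 : q = Nat.fib (m+2) := by rw [hqdef, hm]
      have h3 : ((-1:ℤ))^n = (-1)^m := by rw [hm, pow_add]; norm_num
      rw [h1, h2, h3]
      linarith [hc]
    set e : ℤ := (-1)^n with hedef
    set eR : ℝ := (-1)^n with heRdef
    have he : e = 1 ∨ e = -1 := by
      rcases Nat.even_or_odd n with h | h
      · left; rw [hedef]; exact h.neg_one_pow
      · right; rw [hedef]; exact h.neg_one_pow
    have heR : eR = 1 ∨ eR = -1 := by
      rcases Nat.even_or_odd n with h | h
      · left; rw [heRdef]; exact h.neg_one_pow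
      · right; rw [heRdef]; exact h.neg_one_pow
    have heRe : ((e:ℝ)) = eR := by rw [hedef, heRdef]; push_cast; ring
    have hφpos := phi_pos
    have hφ1 := phi_lt_one
    have hφn : 0 < goldenφ^n := pow_pos hφpos n
    have hφn1 : goldenφ^n < 1 := pow_lt_one₀ hφpos.le hφ1 (by omega)
    have hφq : (q:ℝ) * goldenφ^n ≤ 1 := by
      have := fib_phi_pow_le n
      rwa [← hqdef] at this
    have hφinvq : goldenφ^n ≤ 1/(q:ℝ) := by
      rw [le_div_iff₀ hqR]
      linarith
    have hqφ : (q:ℝ) * goldenφ = (p:ℝ) - eR * goldenφ^n := by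
      have h := fib_phi n (by omega)
      rw [neg_pow, ← hpdef, ← hqdef] at h
      rw [heRdef]
      linarith
    -- sval formula in range
    have hs_formula : ∀ tt : ℕ, sval n tt
        = 2 * Real.sin (π * ((tt:ℝ)/(q:ℝ) - goldenφ^n * ((((tt*p) % q : ℕ):ℝ)/(q:ℝ) - 1/2))) := by
      intro tt
      rw [sval_eq, ← hqdef, ← hpdef]
    have hs0 : sval n 0 = 2 * Real.sin (π * (goldenφ^n/2)) := sval_zero n
    have hs0pos : 0 < sval n 0 := by
      rw [hs0]
      have h1 : 0 < Real.sin (π * (goldenφ^n/2)) := by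
        apply Real.sin_pos_of_pos_of_lt_pi
        · positivity
        · nlinarith [Real.pi_pos]
      linarith
    have hcastq1 : ((q - 1 : ℕ):ℝ) = (q:ℝ) - 1 := by
      push_cast [Nat.cast_sub (show 1 ≤ q by omega)]; ring
    have hsle : ∀ tt, 1 ≤ tt → tt ≤ q - 1 → sval n 0 ≤ sval n tt := by
      intro tt htt1 htt2
      rw [hs_formula tt, hs0]
      set u := (tt * p) % q with hudef
      have hu_lt : u < q := Nat.mod_lt _ (by omega)
      have httR : 1 ≤ (tt:ℝ) := by exact_mod_cast htt1
      have httR2 : (tt:ℝ) ≤ (q:ℝ) - 1 := by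
        rw [← hcastq1]; exact_mod_cast htt2
      have huR : (0:ℝ) ≤ (u:ℝ) := Nat.cast_nonneg u
      have huR2 : (u:ℝ) ≤ (q:ℝ) - 1 := by
        rw [← hcastq1]; exact_mod_cast (show u ≤ q - 1 by omega)
      have hd1 : 1/(q:ℝ) ≤ (tt:ℝ)/q := by gcongr
      have hd2 : (tt:ℝ)/q ≤ ((q:ℝ)-1)/q := by gcongr
      have hd2' : ((q:ℝ)-1)/q = 1 - 1/q := by field_simp
      have hd3 : (u:ℝ)/q ≤ ((q:ℝ)-1)/q := by gcongr
      have hd4 : (0:ℝ) ≤ (u:ℝ)/q := by positivity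
      have hm1 : goldenφ^n * ((u:ℝ)/q - 1/2) ≤ goldenφ^n * (1/2) := by
        apply mul_le_mul_of_nonneg_left _ hφn.le
        rw [hd2'] at hd3
        have h1q : 0 < 1/(q:ℝ) := by positivity
        linarith
      have hm2 : -(goldenφ^n * (1/2)) ≤ goldenφ^n * ((u:ℝ)/q - 1/2) := by
        rw [show -(goldenφ^n * (1/2)) = goldenφ^n * (-(1/2)) by ring]
        apply mul_le_mul_of_nonneg_left _ hφn.le
        linarith
      have hxc : goldenφ^n/2 ≤ (tt:ℝ)/q - goldenφ^n * ((u:ℝ)/q - 1/2) := by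
        linarith [hφinvq, hd1, hm1]
      have hxd : (tt:ℝ)/q - goldenφ^n * ((u:ℝ)/q - 1/2) ≤ 1 - goldenφ^n/2 := by
        rw [hd2'] at hd2
        linarith [hφinvq, hd2, hm2]
      have := sin_ge_sin (goldenφ^n/2) ((tt:ℝ)/q - goldenφ^n * ((u:ℝ)/q - 1/2))
        (by positivity) (by linarith) hxc hxd
      linarith
    have hsne : ∀ tt, 1 ≤ tt → tt ≤ q - 1 → 0 < sval n tt :=
      fun tt h1 h2 => lt_of_lt_of_le hs0pos (hsle tt h1 h2)
    -- symmetry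
    have hsym : ∀ tt, 1 ≤ tt → tt ≤ q - 1 → sval n (q - tt) = sval n tt := by
      intro tt h1 h2
      obtain ⟨hu1, hu2⟩ := nt_mem hq2 hpq h1 h2
      rw [hs_formula (q - tt), hs_formula tt, nt_pair hq2 hpq h1 h2]
      have hc1 : ((q - tt : ℕ):ℝ) = (q:ℝ) - tt := by
        push_cast [Nat.cast_sub (show tt ≤ q by omega)]; ring
      have hc2 : ((q - (tt*p) % q : ℕ):ℝ) = (q:ℝ) - ((tt*p) % q : ℕ) := by
        push_cast [Nat.cast_sub (show (tt*p) % q ≤ q by omega)]; ring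
      rw [hc1, hc2]
      have harg : π * (((q:ℝ) - tt)/q - goldenφ^n * ((((q:ℝ) - ((tt*p) % q : ℕ)))/q - 1/2))
          = π - π * ((tt:ℝ)/q - goldenφ^n * ((((tt*p) % q : ℕ):ℝ)/q - 1/2)) := by
        field_simp
        ring
      rw [harg, Real.sin_pi_sub]
    -- generic angle reduction
    have hangle : ∀ s : ℕ, |2 * Real.sin (π * (s:ℝ) * goldenφ)|
        = |2 * Real.sin (π * ((((s*p) % q : ℕ):ℝ)/(q:ℝ) - eR * goldenφ^n * ((s:ℝ)/q)))| := by
      intro s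
      have hdm : (s * p : ℕ) = q * ((s*p)/q) + (s*p) % q := (Nat.div_add_mod _ _).symm
      have hdmR : ((s:ℝ) * (p:ℝ)) = (q:ℝ) * (((s*p)/q : ℕ):ℝ) + (((s*p) % q : ℕ):ℝ) := by
        exact_mod_cast congrArg (Nat.cast : ℕ → ℝ) hdm
      have hsφ : π * (s:ℝ) * goldenφ
          = π * ((((s*p) % q : ℕ):ℝ)/(q:ℝ) - eR * goldenφ^n * ((s:ℝ)/q)) + ((s*p)/q : ℕ) * π := by
        apply mul_right_cancel₀ hqR.ne'
        have e1 : (π * ((((s*p) % q : ℕ):ℝ)/(q:ℝ) - eR * goldenφ^n * ((s:ℝ)/q))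
              + (((s*p)/q : ℕ):ℝ) * π) * q
            = π * (((s*p) % q : ℕ):ℝ) - π * eR * goldenφ^n * s + (((s*p)/q : ℕ):ℝ) * π * q := by
          field_simp
        have e2 : π * (s:ℝ) * goldenφ * q
            = π * (((s*p) % q : ℕ):ℝ) - π * eR * goldenφ^n * s + (((s*p)/q : ℕ):ℝ) * π * q := by
          calc π * (s:ℝ) * goldenφ * q = π * s * ((q:ℝ) * goldenφ) := by ring
            _ = π * s * ((p:ℝ) - eR * goldenφ^n) := by rw [hqφ]
            _ = π * (((s*p) % q : ℕ):ℝ) - π * eR * goldenφ^n * s + (((s*p)/q : ℕ):ℝ) * π * q := by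
                linear_combination π * hdmR
        rw [e1, e2]
      rw [hsφ, Real.sin_add_nat_mul_pi,
        show (2:ℝ) * ((-1)^((s*p)/q) * Real.sin (π * ((((s*p) % q : ℕ):ℝ)/(q:ℝ)
          - eR * goldenφ^n * ((s:ℝ)/q))))
        = (-1)^((s*p)/q) * (2 * Real.sin (π * ((((s*p) % q : ℕ):ℝ)/(q:ℝ)
          - eR * goldenφ^n * ((s:ℝ)/q)))) by ring,
        abs_mul, abs_pow, abs_neg, abs_one, one_pow, one_mul]
    -- the key pair identity
    have key_r : ∀ r, 1 ≤ r → r ≤ q - 1 →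
        |2 * Real.sin (π * (r:ℝ) * goldenφ)| * |2 * Real.sin (π * ((q - r : ℕ):ℝ) * goldenφ)|
        = sval n ((r*p) % q)^2 - sval n 0^2 := by
      intro r h1 h2
      obtain ⟨hu1, hu2⟩ := nt_mem hq2 hpq h1 h2
      set u := (r*p) % q with hudef
      have hrR : 1 ≤ (r:ℝ) := by exact_mod_cast h1
      have hrR2 : (r:ℝ) ≤ (q:ℝ) - 1 := by rw [← hcastq1]; exact_mod_cast h2
      have hw := nt_mod2 hq2 hpq e k he hcas h1 h2
      rw [← hudef] at hw
      have hwR : (((u*p) % q : ℕ):ℝ)/(q:ℝ) - 1/2 = eR * ((r:ℝ)/q - 1/2) := by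
        rcases he with he1 | he1
        · have heR1 : eR = 1 := by rw [← heRe, he1]; norm_num
          rw [hw, if_pos he1, heR1, one_mul]
        · have heR1 : eR = -1 := by rw [← heRe, he1]; norm_num
          rw [hw, if_neg (by rw [he1]; norm_num), heR1]
          push_cast [Nat.cast_sub (show r ≤ q by omega)]
          field_simp
          ring
      have hsval_u : sval n u
          = 2 * Real.sin (π * ((u:ℝ)/(q:ℝ) - eR * goldenφ^n * ((r:ℝ)/q - 1/2))) := by
        have harg : (π * ((u:ℝ)/(q:ℝ) - goldenφ^n * (eR * ((r:ℝ)/q - 1/2))))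
            = π * ((u:ℝ)/(q:ℝ) - eR * goldenφ^n * ((r:ℝ)/q - 1/2)) := by ring
        rw [hs_formula u, hwR, harg]
      have hf1 : |2 * Real.sin (π * (r:ℝ) * goldenφ)|
          = |2 * Real.sin (π * ((u:ℝ)/(q:ℝ) - eR * goldenφ^n * ((r:ℝ)/q)))| := hangle r
      have hf2 : |2 * Real.sin (π * ((q - r : ℕ):ℝ) * goldenφ)|
          = |2 * Real.sin (π * ((u:ℝ)/(q:ℝ) + eR * goldenφ^n * (1 - (r:ℝ)/q)))| := by
        rw [hangle (q - r), nt_pair hq2 hpq h1 h2, ← hudef]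
        have hcqu : ((q - u : ℕ):ℝ) = (q:ℝ) - u := by
          push_cast [Nat.cast_sub (show u ≤ q by omega)]; ring
        have hcqr : ((q - r : ℕ):ℝ) = (q:ℝ) - r := by
          push_cast [Nat.cast_sub (show r ≤ q by omega)]; ring
        rw [hcqu, hcqr]
        have harg : π * (((q:ℝ) - u)/(q:ℝ) - eR * goldenφ^n * (((q:ℝ) - r)/q))
            = π - π * ((u:ℝ)/(q:ℝ) + eR * goldenφ^n * (1 - (r:ℝ)/q)) := by
          field_simp
          ring
        rw [harg, Real.sin_pi_sub]
      rw [hf1, hf2]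
      have ha_eq : (u:ℝ)/(q:ℝ) - eR * goldenφ^n * ((r:ℝ)/q)
          = ((u:ℝ)/(q:ℝ) - eR * goldenφ^n * ((r:ℝ)/q - 1/2)) - eR * goldenφ^n/2 := by ring
      have hb_eq : (u:ℝ)/(q:ℝ) + eR * goldenφ^n * (1 - (r:ℝ)/q)
          = ((u:ℝ)/(q:ℝ) - eR * goldenφ^n * ((r:ℝ)/q - 1/2)) + eR * goldenφ^n/2 := by ring
      set A := (u:ℝ)/(q:ℝ) - eR * goldenφ^n * ((r:ℝ)/q - 1/2) with hA
      rw [ha_eq, hb_eq]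
      have htrig : Real.sin (π*(A + eR * goldenφ^n/2)) * Real.sin (π*(A - eR * goldenφ^n/2))
          = Real.sin (π*A)^2 - Real.sin (π*(eR * goldenφ^n/2))^2 := by
        have h := sin_prod_identity (π*A) (π*(eR * goldenφ^n/2))
        rw [show π*A + π*(eR * goldenφ^n/2) = π*(A + eR * goldenφ^n/2) by ring,
          show π*A - π*(eR * goldenφ^n/2) = π*(A - eR * goldenφ^n/2) by ring] at h
        exact h
      have hsinV : Real.sin (π*(eR * goldenφ^n/2))^2 = Real.sin (π*(goldenφ^n/2))^2 := by
        rcases heR with h | h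
        · rw [h]; ring_nf
        · rw [h, show π * (-1 * goldenφ^n/2) = -(π * (goldenφ^n/2)) by ring, Real.sin_neg]
          ring
      have hprod_eq : (2*Real.sin (π*(A - eR * goldenφ^n/2))) * (2*Real.sin (π*(A + eR * goldenφ^n/2)))
          = sval n u^2 - sval n 0^2 := by
        rw [hs0, hsval_u]
        linear_combination 4*htrig - 4*hsinV
      have hnonneg : 0 ≤ sval n u^2 - sval n 0^2 := by
        nlinarith [hsle u hu1 hu2, hs0pos]
      calc |2 * Real.sin (π*(A - eR * goldenφ^n/2))| * |2 * Real.sin (π*(A + eR * goldenφ^n/2))|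
          = |(2*Real.sin (π*(A - eR * goldenφ^n/2))) * (2*Real.sin (π*(A + eR * goldenφ^n/2)))| :=
            (abs_mul _ _).symm
        _ = |sval n u^2 - sval n 0^2| := by rw [hprod_eq]
        _ = sval n u^2 - sval n 0^2 := abs_of_nonneg hnonneg
    -- global products
    set F : ℕ → ℝ := fun r => |2 * Real.sin (π * (r:ℝ) * goldenφ)| with hF
    set G := ∏ r ∈ Finset.Icc 1 (q-1), F r with hGdef
    have hGnn : 0 ≤ G := Finset.prod_nonneg (fun i _ => abs_nonneg _)
    have hGsq : G^2 = ∏ tt ∈ Finset.Icc 1 (q-1), (sval n tt^2 - sval n 0^2) := by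
      have hrefl : ∏ r ∈ Finset.Icc 1 (q-1), F (q - r) = G := by
        rw [hGdef]
        apply prod_perm_of_injOn
        · intro x hx; rw [Finset.mem_Icc] at *; omega
        · intro x hx y hy hxy; rw [Finset.mem_Icc] at *; omega
      have hGG : G^2 = ∏ r ∈ Finset.Icc 1 (q-1), (F r * F (q - r)) := by
        rw [Finset.prod_mul_distrib, hrefl, hGdef]; ring
      rw [hGG]
      have hstep : ∀ r ∈ Finset.Icc 1 (q-1), F r * F (q-r) = sval n ((r*p) % q)^2 - sval n 0^2 := by
        intro r hr
        rw [Finset.mem_Icc] at hr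
        exact key_r r hr.1 hr.2
      rw [Finset.prod_congr rfl hstep]
      have hmaps : ∀ x ∈ Finset.Icc 1 (q-1), (x*p) % q ∈ Finset.Icc 1 (q-1) := by
        intro x hx
        rw [Finset.mem_Icc] at *
        obtain ⟨a, b⟩ := nt_mem hq2 hpq hx.1 hx.2
        exact ⟨a, b⟩
      have hinj : ∀ x ∈ Finset.Icc 1 (q-1), ∀ y ∈ Finset.Icc 1 (q-1),
          (x*p) % q = (y*p) % q → x = y := by
        intro x hx y hy hxy
        rw [Finset.mem_Icc] at *
        exact nt_inj hq2 hpq hx.2 hy.2 hxy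
      exact prod_perm_of_injOn (Finset.Icc 1 (q-1)) (fun r => (r*p) % q) hmaps hinj
        (fun tt => sval n tt^2 - sval n 0^2)
    -- split off the last factor of the Sudler product
    have hq_split : sudlerP q goldenφ = F q * G := by
      unfold sudlerP
      rw [hGdef]
      simp only [hF]
      rw [show Finset.Icc 1 q = Finset.Icc 1 ((q-1)+1) by congr 1; omega,
        Finset.prod_Icc_succ_top (by omega), show (q-1)+1 = q by omega]
      ring
    have hFq : F q = |2 * Real.sin (π * goldenφ^n)| := by
      simp only [hF]
      have h1 : π * (q:ℝ) * goldenφ = (p:ℝ) * π - π * (eR * goldenφ^n) := by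
        nlinarith [hqφ, Real.pi_pos]
      rw [h1, Real.sin_nat_mul_pi_sub,
        show (2:ℝ) * -((-1)^p * Real.sin (π * (eR * goldenφ^n)))
          = (-((-1:ℝ)^p)) * (2 * Real.sin (π * (eR * goldenφ^n))) by ring,
        abs_mul, abs_neg, abs_pow, abs_neg, abs_one, one_pow, one_mul]
      rcases heR with h | h
      · rw [h, one_mul]
      · rw [h, show π * (-1 * goldenφ^n) = -(π * goldenφ^n) by ring, Real.sin_neg]
        rw [show (2:ℝ) * -Real.sin (π * goldenφ^n) = -(2 * Real.sin (π * goldenφ^n)) by ring,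
          abs_neg]
    -- B value
    have hdpos : ∀ t ∈ Finset.Icc 1 (q-1), 0 < 2 * Real.sin (π * (t:ℝ) / q) := by
      intro t ht
      rw [Finset.mem_Icc] at ht
      have htR : 1 ≤ (t:ℝ) := by exact_mod_cast ht.1
      have htR2 : (t:ℝ) ≤ (q:ℝ) - 1 := by rw [← hcastq1]; exact_mod_cast ht.2
      have hsin : 0 < Real.sin (π * (t:ℝ) / q) := by
        apply Real.sin_pos_of_pos_of_lt_pi
        · positivity
        · rw [div_lt_iff₀ hqR]
          nlinarith [Real.pi_pos]
      linarith
    have hBval : Bval n = (∏ t ∈ Finset.Icc 1 (q-1), |sval n t|) / q := by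
      unfold Bval
      rw [← hqdef]
      rw [show (∏ t ∈ Finset.Icc 1 (q-1), |sval n t / (2 * Real.sin (π * (t:ℝ) / q))|)
          = ∏ t ∈ Finset.Icc 1 (q-1), (|sval n t| / (2 * Real.sin (π * (t:ℝ) / q))) from
        Finset.prod_congr rfl (fun t ht => by
          rw [abs_div, abs_of_pos (hdpos t ht)])]
      rw [Finset.prod_div_distrib, prod_two_sin q (by omega)]
    have hBnn : 0 ≤ Bval n := by
      unfold Bval
      exact Finset.prod_nonneg (fun i _ => abs_nonneg _)
    -- C squared
    have hf_nonneg : ∀ tt, 1 ≤ tt → tt ≤ q-1 → 0 ≤ 1 - sval n 0^2/sval n tt^2 := by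
      intro tt h1 h2
      have ha := hsle tt h1 h2
      have hb := hs0pos
      have hc := hsne tt h1 h2
      rw [sub_nonneg, div_le_one (by positivity)]
      nlinarith
    have hfsym : ∀ x, 1 ≤ x → x ≤ q - 1 →
        (fun tt => 1 - sval n 0^2/sval n tt^2) (q - x) = (fun tt => 1 - sval n 0^2/sval n tt^2) x := by
      intro x h1 h2
      simp only []
      rw [hsym x h1 h2]
    have hIcc : ∀ b : ℕ, Finset.Icc 1 b = Finset.Ioc 0 b := fun b => Finset.Icc_add_one_left_eq_Ioc 0 b
    set m := (q-1)/2 with hmdef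
    have hCsq : Cval n ^ 2 = ∏ tt ∈ Finset.Icc 1 (q-1), (1 - sval n 0^2/sval n tt^2) := by
      unfold Cval halfProd
      split_ifs with hev
      · rw [← hqdef] at hev
        rw [← hqdef, ← hmdef]
        obtain ⟨j, hj⟩ := hev
        have hq_eq : q = 2*m + 2 := by omega
        have hq_half : q / 2 = m + 1 := by omega
        rw [hq_half]
        have hfm1 : 0 ≤ 1 - sval n 0^2/sval n (m+1)^2 := hf_nonneg (m+1) (by omega) (by omega)
        have hsqrt : Real.sqrt (1 - sval n 0^2/sval n (m+1)^2) ^ 2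
            = 1 - sval n 0^2/sval n (m+1)^2 := Real.sq_sqrt hfm1
        have hsplit : ∏ tt ∈ Finset.Ioc 0 (q-1), (1 - sval n 0^2/sval n tt^2)
            = (∏ tt ∈ Finset.Ioc 0 m, (1 - sval n 0^2/sval n tt^2))
              * ∏ tt ∈ Finset.Ioc m (q-1), (1 - sval n 0^2/sval n tt^2) :=
          (Finset.prod_Ioc_consecutive _ (by omega) (by omega)).symm
        have hsplit2 : ∏ tt ∈ Finset.Ioc m (q-1), (1 - sval n 0^2/sval n tt^2)
            = (1 - sval n 0^2/sval n (m+1)^2)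
              * ∏ tt ∈ Finset.Ioc (m+1) (q-1), (1 - sval n 0^2/sval n tt^2) := by
          rw [← Finset.prod_Ioc_consecutive _ (show m ≤ m+1 by omega) (show m+1 ≤ q-1 by omega),
            Nat.Ioc_succ_singleton, Finset.prod_singleton]
        have hrefl2 : ∏ tt ∈ Finset.Ioc (m+1) (q-1), (1 - sval n 0^2/sval n tt^2)
            = ∏ tt ∈ Finset.Ioc 0 m, (1 - sval n 0^2/sval n tt^2) := by
          have h := prod_Ioc_reflect (fun tt => 1 - sval n 0^2/sval n tt^2) q (m+1)
            hq2 (by omega) (by omega) hfsym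
          rw [show q - 1 - (m+1) = m by omega] at h
          exact h
        rw [hIcc, hIcc, hsplit, hsplit2, hrefl2, mul_pow, hsqrt]
        ring
      · rw [← hqdef] at hev
        rw [← hqdef, ← hmdef]
        have hodd : Odd q := Nat.odd_iff.mpr (by
          rcases Nat.even_or_odd q with h | h
          · exact absurd h hev
          · exact Nat.odd_iff.mp h)
        have hq_eq : q = 2*m + 1 := by
          rcases hodd with ⟨j, hj⟩
          omega
        have hm1 : 1 ≤ m := by omega
        rw [mul_one]
        have hsplit : ∏ tt ∈ Finset.Ioc 0 (q-1), (1 - sval n 0^2/sval n tt^2)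
            = (∏ tt ∈ Finset.Ioc 0 m, (1 - sval n 0^2/sval n tt^2))
              * ∏ tt ∈ Finset.Ioc m (q-1), (1 - sval n 0^2/sval n tt^2) :=
          (Finset.prod_Ioc_consecutive _ (by omega) (by omega)).symm
        have hrefl2 : ∏ tt ∈ Finset.Ioc m (q-1), (1 - sval n 0^2/sval n tt^2)
            = ∏ tt ∈ Finset.Ioc 0 m, (1 - sval n 0^2/sval n tt^2) := by
          have h := prod_Ioc_reflect (fun tt => 1 - sval n 0^2/sval n tt^2) q m
            hq2 hm1 (by omega) hfsym
          rw [show q - 1 - m = m by omega] at h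
          exact h
        rw [hIcc, hIcc, hsplit, hrefl2]
        ring
    have hCnn : 0 ≤ Cval n := by
      unfold Cval halfProd
      rw [← hqdef, ← hmdef]
      apply mul_nonneg
      · apply Finset.prod_nonneg
        intro tt ht
        rw [Finset.mem_Icc] at ht
        exact hf_nonneg tt ht.1 (by omega)
      · split_ifs
        · exact Real.sqrt_nonneg _
        · norm_num
    have hAnn : 0 ≤ Aval n := abs_nonneg _
    have hAsq : Aval n ^ 2 = 4*(q:ℝ)^2 * Real.sin (π * goldenφ^n)^2 := by
      unfold Aval
      rw [← hqdef, sq_abs]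
      ring
    have hBsq : Bval n ^2 = (∏ tt ∈ Finset.Icc 1 (q-1), sval n tt^2) / (q:ℝ)^2 := by
      rw [hBval, div_pow, ← Finset.prod_pow]
      congr 1
      exact Finset.prod_congr rfl (fun t ht => sq_abs _)
    -- squared equality
    have hsq_eq : (sudlerP q goldenφ)^2 = (Aval n * Bval n * Cval n)^2 := by
      rw [hq_split, mul_pow, hFq, sq_abs, hGsq]
      have hRHS : (Aval n * Bval n * Cval n)^2 = Aval n^2 * Bval n^2 * Cval n^2 := by ring
      rw [hRHS, hAsq, hBsq, hCsq]
      have hstep : ∀ tt ∈ Finset.Icc 1 (q-1),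
          (sval n tt^2 - sval n 0^2) = sval n tt^2 * (1 - sval n 0^2/sval n tt^2) := by
        intro tt ht
        rw [Finset.mem_Icc] at ht
        have := hsne tt ht.1 ht.2
        field_simp
      rw [Finset.prod_congr rfl hstep, Finset.prod_mul_distrib]
      field_simp
      ring
    have hL : 0 ≤ sudlerP q goldenφ := by
      unfold sudlerP
      exact Finset.prod_nonneg (fun i _ => abs_nonneg _)
    have hR : 0 ≤ Aval n * Bval n * Cval n := mul_nonneg (mul_nonneg hAnn hBnn) hCnn
    have habs2 : |sudlerP q goldenφ| = |Aval n * Bval n * Cval n| := by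
      rw [← Real.sqrt_sq_eq_abs, ← Real.sqrt_sq_eq_abs, hsq_eq]
    rwa [abs_of_nonneg hL, abs_of_nonneg hR] at habs2
end

section
/- The series ∑_{t=1}^∞ 1/u_t² converges and its sum is strictly less than 1/7, where u_t = 2(√5 t − {t φ} + 1/2). -/
open Real

/-- `u_t = 2(√5 t − {t φ} + 1/2)` for `t ≥ 1`. -/
noncomputable def uval (t : ℕ) : ℝ :=
  2 * (Real.sqrt 5 * t - Int.fract ((t : ℝ) * goldenφ) + 1 / 2)

/-!
Since `{t φ} < 1` and `√5 > 11/5`, we have `u_t > (22 t - 5)/5`. This gives `1/u_1² ≤ 25/289`, and for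
`n ≥ 1` the inequality `(22 n + 17)² ≥ 475 n (n + 1)` bounds `1/u_{n+1}²` by the telescoping term
`1/(19 n) - 1/(19 (n + 1))`. Hence every partial sum is at most `25/289 + 1/19 = 764/5491 < 1/7`.
-/

open Finset

lemma lt_uval (t : ℕ) : 22 / 5 * (t : ℝ) - 1 < uval t := by
  have hsqrt : (11 / 5 : ℝ) < √5 := by
    rw [Real.lt_sqrt (by norm_num)]
    norm_num
  have hfract := Int.fract_lt_one ((t : ℝ) * goldenφ)
  have ht : (0 : ℝ) ≤ t := t.cast_nonneg
  unfold uval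
  nlinarith

lemma one_div_uval_one_sq_le : 1 / uval 1 ^ 2 ≤ 25 / 289 := by
  have hu := lt_uval 1
  norm_num at hu
  rw [div_le_div_iff₀ (by positivity) (by norm_num)]
  nlinarith

lemma one_div_uval_sq_le_sub (n : ℕ) :
    1 / uval (n + 2) ^ 2 ≤ 1 / (19 * (n + 1 : ℝ)) - 1 / (19 * (n + 2 : ℝ)) := by
  have hu := lt_uval (n + 2)
  have hn : (0 : ℝ) ≤ n := n.cast_nonneg
  push_cast at hu
  have hpos : 0 < 22 / 5 * ((n : ℝ) + 2) - 1 := by linarith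
  have htele : 1 / (19 * (n + 1 : ℝ)) - 1 / (19 * (n + 2 : ℝ)) = 1 / (19 * (n + 1) * (n + 2)) := by
    field_simp
    ring
  rw [htele]
  apply one_div_le_one_div_of_le (by positivity)
  nlinarith [pow_le_pow_left₀ hpos.le hu.le 2]

lemma sum_range_succ_one_div_uval_sq_le (n : ℕ) :
    ∑ t ∈ range (n + 1), 1 / uval (t + 1) ^ 2 ≤ 25 / 289 + 1 / 19 - 1 / (19 * (n + 1 : ℝ)) := by
  induction n with
  | zero => simpa using one_div_uval_one_sq_le
  | succ n ih =>
    rw [sum_range_succ]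
    have hstep := one_div_uval_sq_le_sub n
    push_cast
    rw [add_assoc (n : ℝ), one_add_one_eq_two]
    linarith

lemma sum_range_one_div_uval_sq_le (n : ℕ) :
    ∑ t ∈ range n, 1 / uval (t + 1) ^ 2 ≤ 25 / 289 + 1 / 19 := by
  cases n with
  | zero => norm_num
  | succ n =>
    have htail : 0 ≤ 1 / (19 * (n + 1 : ℝ)) := by positivity
    linarith [sum_range_succ_one_div_uval_sq_le n]

/-- The series `∑_{t=1}^∞ 1/u_t²` converges and its sum is strictly less than `1/7`. -/
theorem sum_inv_uval_sq_lt :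
    Summable (fun t : ℕ => 1 / (uval (t + 1)) ^ 2) ∧
    ∑' t : ℕ, 1 / (uval (t + 1)) ^ 2 < 1 / 7 := by
  have hnonneg : ∀ t : ℕ, 0 ≤ 1 / uval (t + 1) ^ 2 := fun t => by positivity
  refine ⟨summable_of_sum_range_le hnonneg sum_range_one_div_uval_sq_le, ?_⟩
  calc ∑' t : ℕ, 1 / uval (t + 1) ^ 2
      ≤ 25 / 289 + 1 / 19 := Real.tsum_le_of_sum_range_le hnonneg sum_range_one_div_uval_sq_le
    _ < 1 / 7 := by norm_num
end
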